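/- Let D be a smooth DNNF covered by separators. Then the formula ψ_c implies the direct encoding constraints: every satisfying assignment of ψ_c assigns, for each i = 1,…,n, the value 1 to exactly one domain variable of ⟦x_i⟧. -/

import Mathlib

set_option autoImplicit false

universe u v

/-- A literal: a boolean variable together with a polarity. -/
structure Lit (V : Type u) where
  var : V
  pos : Bool

/-- The complementary literal. -/
def Lit.negate {V : Type u} (l : Lit V) : Lit V := ⟨l.var, !l.pos⟩

/-- A literal is satisfied by a total assignment. -/
def Lit.eval {V : Type u} (a : V → Bool) (l : Lit V) : Prop := a l.var = l.pos

/-- A clause is a (finite in all our uses) disjunction of a set of literals. -/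
abbrev Clause (V : Type u) := Set (Lit V)

/-- A CNF formula is a conjunction of a set of clauses. -/
abbrev CNF (V : Type u) := Set (Clause V)

/-- A clause is satisfied iff some of its literals is. -/
def Clause.Sat {V : Type u} (a : V → Bool) (C : Clause V) : Prop := ∃ l ∈ C, Lit.eval a l

/-- A CNF formula is satisfied iff all of its clauses are. -/
def CNF.Sat {V : Type u} (a : V → Bool) (φ : CNF V) : Prop := ∀ C ∈ φ, Clause.Sat a C

def CNF.Satisfiable {V : Type u} (φ : CNF V) : Prop := ∃ a : V → Bool, CNF.Sat a φ

/-- `φ ⊨ l`. -/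
def CNF.Entails {V : Type u} (φ : CNF V) (l : Lit V) : Prop :=
  ∀ a : V → Bool, CNF.Sat a φ → Lit.eval a l

/-- A partial assignment, i.e. a set of literals, is consistent if it contains
no complementary pair of literals. -/
def ConsistentPA {V : Type u} (α : Set (Lit V)) : Prop := ∀ l ∈ α, Lit.negate l ∉ α

/-- The set of unit clauses corresponding to a partial assignment `α`;
`φ ∪ paUnits α` represents `φ ∧ α`. -/
def paUnits {V : Type u} (α : Set (Lit V)) : CNF V := (fun l => ({l} : Clause V)) '' α

/-- Derivability by repeated unit resolution: from a clause `C ∋ l` and the unit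
clause `¬l` derive `C \ {l}`.  `UnitDeriv φ ∅` means `φ ⊢₁ ⊥` and
`UnitDeriv φ {l}` means `φ ⊢₁ l`. -/
inductive UnitDeriv {V : Type u} (φ : CNF V) : Clause V → Prop where
  | base {C : Clause V} : C ∈ φ → UnitDeriv φ C
  | step {C : Clause V} (l : Lit V) : l ∈ C → UnitDeriv φ C →
      UnitDeriv φ {Lit.negate l} → UnitDeriv φ (C \ {l})

/-- The set of variables occurring in a CNF formula. -/
def CNF.vars {V : Type u} (φ : CNF V) : Set V := ⋃ C ∈ φ, Lit.var '' C

/-- All literals of `α` are literals on the variables `W`. -/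
def LitsOn {V : Type u} (α : Set (Lit V)) (W : Set V) : Prop := ∀ l ∈ α, l.var ∈ W

/-- `φ` is unit refutation complete on the variables `W`. -/
def URCon {V : Type u} (φ : CNF V) (W : Set V) : Prop :=
  ∀ α : Set (Lit V), ConsistentPA α → LitsOn α W →
    ¬ CNF.Satisfiable (φ ∪ paUnits α) → UnitDeriv (φ ∪ paUnits α) ∅

/-- `φ` is propagation complete on the variables `W`. -/
def PCon {V : Type u} (φ : CNF V) (W : Set V) : Prop :=
  ∀ α : Set (Lit V), ConsistentPA α → LitsOn α W →
    ∀ l : Lit V, l.var ∈ W → CNF.Entails (φ ∪ paUnits α) l →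
      UnitDeriv (φ ∪ paUnits α) {l} ∨ UnitDeriv (φ ∪ paUnits α) ∅

/-- `φ` is a CNF encoding of the function `f` with input variables `X`
(the remaining variables of `φ` being auxiliary); `f` is assumed to depend
only on the values of the variables in `X`. -/
def IsEncodingOn {V : Type u} (φ : CNF V) (X : Set V) (f : (V → Bool) → Prop) : Prop :=
  ∀ a : V → Bool, f a ↔ ∃ b : V → Bool, (∀ x ∈ X, b x = a x) ∧ CNF.Sat b φ

/-- The positive literal on a variable. -/
def posL {V : Type u} (x : V) : Lit V := ⟨x, true⟩
/-- The negative literal on a variable. -/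
def negL {V : Type u} (x : V) : Lit V := ⟨x, false⟩

/-! ## Smooth DNNFs over variables with finite domains -/

/-- The label of a node of an NNF: an ∧-node, an ∨-node, or a leaf labeled
with the domain variable `⟦x_i = s⟧`. -/
inductive NLabel (n : ℕ) : Type where
  | And : NLabel n
  | Or : NLabel n
  | Leaf : Fin n → ℕ → NLabel n

/-- An NNF: a rooted DAG whose inner nodes are labeled `∧` or `∨` and whose
leaves are labeled with domain variables `⟦x_i = s⟧` (`s ∈ Dom i`) of the
variables `x₁, …, xₙ` with finite domains `Dom i`.  The edge `edge v u` means
that `u` is a child (an input) of `v`.  Well-formedness conditions are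
collected in `NNF.WF`. -/
structure NNF : Type 1 where
  /-- the nodes -/
  N : Type
  /-- `edge v u`: there is an edge from `v` to its child `u` -/
  edge : N → N → Prop
  /-- the root -/
  root : N
  /-- the number of variables -/
  n : ℕ
  /-- the (finite, non-empty) domains of the variables -/
  Dom : Fin n → Set ℕ
  /-- the label of each node -/
  label : N → NLabel n

namespace NNF

/-- Reachability along directed edges. -/
def Reach (D : NNF) (v u : D.N) : Prop := Relation.ReflTransGen D.edge v u

/-- `var(v)`: the set of variables `x_i` such that a leaf labeled with a domain
variable of `x_i` is reachable from `v`. -/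
def varsOf (D : NNF) (v : D.N) : Set (Fin D.n) :=
  {i | ∃ u s, D.Reach v u ∧ D.label u = NLabel.Leaf i s}

/-- `v` is a leaf. -/
def IsLeaf (D : NNF) (v : D.N) : Prop := ∃ i s, D.label v = NLabel.Leaf i s

/-- `H_i`: the set of nodes `v` with `x_i ∈ var(v)`; the subgraph of `D`
induced on `H_i` is `D_i`. -/
def H (D : NNF) (i : Fin D.n) : Set D.N := {v | i ∈ D.varsOf v}

/-- `L_i`: the set of leaves labeled with domain variables of `x_i`. -/
def Lset (D : NNF) (i : Fin D.n) : Set D.N := {v | ∃ s, D.label v = NLabel.Leaf i s}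

/-- Well-formedness of an NNF: the domains are non-empty; the edge relation is
well-founded (the DAG is acyclic); leaves are labeled with domain variables
(`s ∈ Dom i`) and have no outgoing edges; each domain variable labels at most
one leaf; every node is reachable from the root; for each `i` at least one
domain variable of `x_i` labels a leaf; and every node has a leaf below it
(no node represents a constant). -/
def WF (D : NNF) : Prop :=
  (∀ i, (D.Dom i).Nonempty) ∧
  WellFounded (fun u v : D.N => D.edge v u) ∧
  (∀ v i s, D.label v = NLabel.Leaf i s → s ∈ D.Dom i) ∧
  (∀ v i s, D.label v = NLabel.Leaf i s → ∀ u, ¬ D.edge v u) ∧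
  (∀ v w i s, D.label v = NLabel.Leaf i s → D.label w = NLabel.Leaf i s → v = w) ∧
  (∀ v, D.Reach D.root v) ∧
  (∀ i, ∃ v s, D.label v = NLabel.Leaf i s) ∧
  (∀ v, ∃ i, i ∈ D.varsOf v)

/-- Decomposability: the children of every ∧-node have pairwise disjoint sets
of variables. -/
def Decomposable (D : NNF) : Prop :=
  ∀ v, D.label v = NLabel.And →
    ∀ u₁ u₂, D.edge v u₁ → D.edge v u₂ → u₁ ≠ u₂ →
      Disjoint (D.varsOf u₁) (D.varsOf u₂)

/-- Smoothness: every child of an ∨-node `v` has the same variables as `v`. -/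
def Smooth (D : NNF) : Prop :=
  ∀ v u, D.label v = NLabel.Or → D.edge v u → D.varsOf u = D.varsOf v

/-- A node of `D` evaluates to `true` under the assignment `a` of the domain
variables, where the children are taken with respect to the edge relation `E`
(this generality is used when edges are removed from `D`). -/
inductive EvalWith (D : NNF) (E : D.N → D.N → Prop) (a : Fin D.n × ℕ → Bool) : D.N → Prop where
  | leaf {v : D.N} {i : Fin D.n} {s : ℕ} :
      D.label v = NLabel.Leaf i s → a (i, s) = true → EvalWith D E a v
  | and {v : D.N} : D.label v = NLabel.And →
      (∀ u, E v u → EvalWith D E a u) → EvalWith D E a v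
  | or {v u : D.N} : D.label v = NLabel.Or → E v u →
      EvalWith D E a u → EvalWith D E a v

/-- A node of `D` evaluates to `true` under the assignment `a`. -/
def EvalTrue (D : NNF) (a : Fin D.n × ℕ → Bool) (v : D.N) : Prop :=
  D.EvalWith D.edge a v

/-- `f_D(⟦x⟧)`: the monotone boolean function of the domain variables computed
by `D`. -/
def fD (D : NNF) (a : Fin D.n × ℕ → Bool) : Prop := D.EvalTrue a D.root

/-- The direct encoding constraints: for each `i` exactly one domain variable
of `x_i` is true. -/
def DConsistent (D : NNF) (a : Fin D.n × ℕ → Bool) : Prop :=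
  ∀ i, ∃! s, s ∈ D.Dom i ∧ a (i, s) = true

/-- `f_D'(⟦x⟧)`: the conjunction of `f_D` and the direct encoding constraints. -/
def fD' (D : NNF) (a : Fin D.n × ℕ → Bool) : Prop := D.fD a ∧ D.DConsistent a

/-- A subgraph of `D`: a set of nodes together with a set of edges of `D`
between them. -/
structure Subgraph (D : NNF) : Type where
  mem : Set D.N
  tedge : D.N → D.N → Prop
  le_edge : ∀ {v u}, tedge v u → D.edge v u
  mem_left : ∀ {v u}, tedge v u → v ∈ mem
  mem_right : ∀ {v u}, tedge v u → u ∈ mem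

/-- A minimal satisfying subtree of `D`: a rooted subtree (out-arborescence)
of `D` whose root is the root of `D`, which contains all the `D`-edges out of
each of its ∧-nodes and exactly one `D`-edge out of each of its ∨-nodes. -/
def IsMST (D : NNF) (T : D.Subgraph) : Prop :=
  D.root ∈ T.mem ∧
  (∀ v ∈ T.mem, Relation.ReflTransGen T.tedge D.root v) ∧
  (∀ v ∈ T.mem, v ≠ D.root → ∃! u, T.tedge u v) ∧
  (∀ u, ¬ T.tedge u D.root) ∧
  (∀ v ∈ T.mem, D.label v = NLabel.And → ∀ u, D.edge v u → T.tedge v u) ∧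
  (∀ v ∈ T.mem, D.label v = NLabel.Or → ∃! u, T.tedge v u)

/-- `β_T`: the total assignment of the domain variables that sets to `1`
exactly the domain variables labeling the leaves of `T`. -/
noncomputable def beta (D : NNF) (T : D.Subgraph) : Fin D.n × ℕ → Bool :=
  fun p => @decide (∃ v ∈ T.mem, D.label v = NLabel.Leaf p.1 p.2)
    (Classical.propDecidable _)

/-- A root-to-leaf path in `D_i` (the subgraph of `D` induced on `H_i`),
represented by the list of its nodes. -/
def IsRLPath (D : NNF) (i : Fin D.n) (p : List D.N) : Prop :=
  p ≠ [] ∧ (∀ v ∈ p, v ∈ D.H i) ∧ List.Chain' D.edge p ∧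
  p.head? = some D.root ∧ ∃ t, p.getLast? = some t ∧ t ∈ D.Lset i

/-- A separator in `D_i`: a set `S ⊆ H_i` such that every path in `D_i` from
the root to a leaf contains precisely one node of `S`. -/
def IsSeparator (D : NNF) (i : Fin D.n) (S : Set D.N) : Prop :=
  S ⊆ D.H i ∧ ∀ p, D.IsRLPath i p → ∃! w, w ∈ p ∧ w ∈ S

/-- `D` is covered by the collections `𝒮 i` of separators: each `S ∈ 𝒮 i` is a
separator in `D_i` and the union of `𝒮 i` is `H_i ∖ {ρ}`. -/
def CoveredBy (D : NNF) (𝒮 : ∀ _ : Fin D.n, Set (Set D.N)) : Prop :=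
  ∀ i, (∀ S ∈ 𝒮 i, D.IsSeparator i S) ∧ ⋃₀ 𝒮 i = D.H i \ {D.root}

/-- `D` can be covered by separators. -/
def Covered (D : NNF) : Prop := ∃ 𝒮, D.CoveredBy 𝒮

end NNF

namespace NNF

/-- The variables of the encodings of `D`: `Sum.inl (i, s)` is the domain
variable `⟦x_i = s⟧` and `Sum.inr v` is the boolean variable of the inner node
`v`.  Leaf nodes are identified with the domain variables labeling them via
`NNF.nvar`. -/
abbrev EVar (D : NNF) : Type := (Fin D.n × ℕ) ⊕ D.N

/-- The variable of a node of `D`: a leaf is identified with the domain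
variable labeling it, an inner node is a variable of its own. -/
def nvar (D : NNF) (v : D.N) : D.EVar :=
  match D.label v with
  | NLabel.Leaf i s => Sum.inl (i, s)
  | NLabel.And => Sum.inr v
  | NLabel.Or => Sum.inr v

/-- Group N1: `v → v₁ ∨ … ∨ v_k` for each ∨-node `v` with children
`v₁, …, v_k`. -/
def grpN1 (D : NNF) : CNF D.EVar :=
  {C | ∃ v, D.label v = NLabel.Or ∧
    C = insert (negL (D.nvar v)) {l | ∃ u, D.edge v u ∧ l = posL (D.nvar u)}}

/-- Group N2: `v → v_i` for each ∧-node `v` and each child `v_i` of `v`. -/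
def grpN2 (D : NNF) : CNF D.EVar :=
  {C | ∃ v u, D.label v = NLabel.And ∧ D.edge v u ∧
    C = ({negL (D.nvar v), posL (D.nvar u)} : Clause D.EVar)}

/-- Group N3: `v → p₁ ∨ … ∨ p_k` for each non-root node `v` with predecessors
`p₁, …, p_k`. -/
def grpN3 (D : NNF) : CNF D.EVar :=
  {C | ∃ v, v ≠ D.root ∧
    C = insert (negL (D.nvar v)) {l | ∃ p, D.edge p v ∧ l = posL (D.nvar p)}}

/-- Group N4: the unit clause `¬l` for each domain variable `l = ⟦x_i = s⟧`
(`s ∈ Dom i`) that is not a leaf of `D`. -/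
def grpN4 (D : NNF) : CNF D.EVar :=
  {C | ∃ i s, s ∈ D.Dom i ∧ (∀ v, D.label v ≠ NLabel.Leaf i s) ∧
    C = ({negL (Sum.inl (i, s))} : Clause D.EVar)}

/-- Group N5: `amo*(S)` for each separator `S ∈ 𝒮 i` and each `i`, i.e. all
the clauses `¬u ∨ ¬w` for distinct `u, w ∈ S`. -/
def grpN5 (D : NNF) (𝒮 : ∀ _ : Fin D.n, Set (Set D.N)) : CNF D.EVar :=
  {C | ∃ i, ∃ S ∈ 𝒮 i, ∃ u ∈ S, ∃ w ∈ S, u ≠ w ∧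
    C = ({negL (D.nvar u), negL (D.nvar w)} : Clause D.EVar)}

/-- Group N6: `eo*(S)` for each separator `S ∈ 𝒮 i` and each `i`, i.e.
`amo*(S)` together with the clause `∨_{u ∈ S} u`. -/
def grpN6 (D : NNF) (𝒮 : ∀ _ : Fin D.n, Set (Set D.N)) : CNF D.EVar :=
  D.grpN5 𝒮 ∪ {C | ∃ i, ∃ S ∈ 𝒮 i, C = {l | ∃ u ∈ S, l = posL (D.nvar u)}}

/-- The formula `ψ_c`: the clauses of groups N1–N4 and N5 together with the
unit clause `ρ`. -/
def psiC (D : NNF) (𝒮 : ∀ _ : Fin D.n, Set (Set D.N)) : CNF D.EVar :=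
  D.grpN1 ∪ D.grpN2 ∪ D.grpN3 ∪ D.grpN4 ∪ D.grpN5 𝒮 ∪
    {({posL (D.nvar D.root)} : Clause D.EVar)}

/-- The formula `ψ_p`: the clauses of groups N1–N4 and N6 together with the
unit clause `ρ`. -/
def psiP (D : NNF) (𝒮 : ∀ _ : Fin D.n, Set (Set D.N)) : CNF D.EVar :=
  D.grpN1 ∪ D.grpN2 ∪ D.grpN3 ∪ D.grpN4 ∪ D.grpN6 𝒮 ∪
    {({posL (D.nvar D.root)} : Clause D.EVar)}

/-- The subgraph of `D` induced by a set of nodes. -/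
def induced (D : NNF) (Sn : Set D.N) : D.Subgraph where
  mem := Sn
  tedge := fun v u => D.edge v u ∧ v ∈ Sn ∧ u ∈ Sn
  le_edge := fun h => h.1
  mem_left := fun h => h.2.1
  mem_right := fun h => h.2.2

/-- The input variables of the encodings: the domain variables `⟦x_i = s⟧`
for `s ∈ Dom i`. -/
def inputVars (D : NNF) : Set D.EVar :=
  {w | ∃ i s, s ∈ D.Dom i ∧ w = Sum.inl (i, s)}

/-- The auxiliary variables of the encodings `ψ_c`, `ψ_p`: the variables of
the inner nodes of `D`. -/
def nodeVars (D : NNF) : Set D.EVar :=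
  {w | ∃ v, (D.label v = NLabel.And ∨ D.label v = NLabel.Or) ∧ w = Sum.inr v}

/-- `f_D'(⟦x⟧)` viewed as a function of assignments of the encoding
variables (it depends only on the domain variables). -/
def fDE (D : NNF) (a : D.EVar → Bool) : Prop :=
  D.fD' (fun p => a (Sum.inl p))

end NNF

/-! Fix `i`. The root is true, and the clauses N1 and N2 always lead from a true node of `D_i`
to a true child in `D_i` (smoothness keeps the children of ∨-nodes in `D_i`), so there is a true
path in `D_i` from the root to a leaf of `L_i`, whose label is a true domain variable of `x_i`.
Every true leaf `w` of `L_i` lies on this path: either `w` is the root, or `w` belongs to a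
separator, which the path meets in a true node, and `amo*` forces that node to be `w`. A leaf of
a path is its last node, so `w` is the end of the path. The clauses N4 exclude true domain
variables that label no leaf. -/

theorem List.IsChain.eq_of_mem_of_getLast?_eq {α : Type*} {R : α → α → Prop} {x t : α}
    (hx : ∀ y, ¬ R x y) : ∀ {p : List α}, p.IsChain R → x ∈ p → p.getLast? = some t → x = t
  | [_], _, hmem, hlast => by simp_all
  | y :: z :: p, hp, hmem, hlast => by
    rw [List.isChain_cons_cons] at hp
    rw [List.getLast?_cons_cons] at hlast
    rcases List.mem_cons.mp hmem with rfl | hmem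
    · exact absurd hp.1 (hx z)
    · exact eq_of_mem_of_getLast?_eq hx hp.2 hmem hlast

namespace NNF

variable {D : NNF} {a : D.EVar → Bool}

theorem nvar_of_label_eq_leaf {v : D.N} {i : Fin D.n} {s : ℕ}
    (hv : D.label v = NLabel.Leaf i s) : D.nvar v = Sum.inl (i, s) := by
  rw [nvar, hv]

theorem mem_H_of_label_eq_leaf {v : D.N} {i : Fin D.n} {s : ℕ}
    (hv : D.label v = NLabel.Leaf i s) : v ∈ D.H i :=
  ⟨v, s, .refl, hv⟩

theorem root_mem_H (hreach : ∀ v, D.Reach D.root v) (i : Fin D.n)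
    (hleaf : ∃ v s, D.label v = NLabel.Leaf i s) : D.root ∈ D.H i := by
  obtain ⟨v, s, hv⟩ := hleaf
  exact ⟨v, s, hreach v, hv⟩

theorem mem_Lset_of_mem_H (hleaf : ∀ v i s, D.label v = NLabel.Leaf i s → ∀ u, ¬ D.edge v u)
    {v : D.N} {i j : Fin D.n} {s : ℕ} (hv : D.label v = NLabel.Leaf j s) (hvi : v ∈ D.H i) :
    v ∈ D.Lset i := by
  obtain ⟨w, s', hvw, hw⟩ := hvi
  rcases hvw.cases_head with rfl | ⟨c, hvc, -⟩
  · exact ⟨s', hw⟩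
  · exact absurd hvc (hleaf v j s hv c)

theorem exists_edge_mem_H_of_not_leaf {v : D.N} {i : Fin D.n}
    (hv : ∀ j s, D.label v ≠ NLabel.Leaf j s) (hvi : v ∈ D.H i) :
    ∃ c, D.edge v c ∧ c ∈ D.H i := by
  obtain ⟨w, s, hvw, hw⟩ := hvi
  rcases hvw.cases_head with rfl | ⟨c, hvc, hcw⟩
  · exact absurd hw (hv i s)
  · exact ⟨c, hvc, w, s, hcw, hw⟩

theorem Smooth.mem_H_of_edge (hsm : D.Smooth) {v u : D.N} {i : Fin D.n}
    (hv : D.label v = NLabel.Or) (hvu : D.edge v u) (hvi : v ∈ D.H i) : u ∈ D.H i := by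
  change i ∈ D.varsOf u
  rwa [hsm v u hv hvu]

theorem sat_psiC_root {𝒮 : ∀ _ : Fin D.n, Set (Set D.N)} (ha : CNF.Sat a (D.psiC 𝒮)) :
    a (D.nvar D.root) = true := by
  simpa [Clause.Sat, Lit.eval, posL] using ha {posL (D.nvar D.root)} (by simp [psiC])

theorem sat_grpN1 (ha : CNF.Sat a D.grpN1) {v : D.N} (hv : D.label v = NLabel.Or)
    (hvt : a (D.nvar v) = true) : ∃ u, D.edge v u ∧ a (D.nvar u) = true := by
  simpa [Clause.Sat, Lit.eval, negL, posL, hvt] using ha _ ⟨v, hv, rfl⟩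

theorem sat_grpN2 (ha : CNF.Sat a D.grpN2) {v u : D.N} (hv : D.label v = NLabel.And)
    (hvu : D.edge v u) (hvt : a (D.nvar v) = true) : a (D.nvar u) = true := by
  simpa [Clause.Sat, Lit.eval, negL, posL, hvt] using ha _ ⟨v, u, hv, hvu, rfl⟩

theorem sat_grpN4 (ha : CNF.Sat a D.grpN4) {i : Fin D.n} {s : ℕ} (hs : s ∈ D.Dom i)
    (hnone : ∀ v, D.label v ≠ NLabel.Leaf i s) : a (Sum.inl (i, s)) = false := by
  simpa [Clause.Sat, Lit.eval, negL] using ha _ ⟨i, s, hs, hnone, rfl⟩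

theorem sat_grpN5 {𝒮 : ∀ _ : Fin D.n, Set (Set D.N)} (ha : CNF.Sat a (D.grpN5 𝒮))
    {i : Fin D.n} {S : Set D.N} (hS : S ∈ 𝒮 i) {u w : D.N} (hu : u ∈ S) (hw : w ∈ S)
    (hut : a (D.nvar u) = true) (hwt : a (D.nvar w) = true) : u = w := by
  by_contra hne
  simpa [Clause.Sat, Lit.eval, negL, hut, hwt] using ha _ ⟨i, S, hS, u, hu, w, hw, hne, rfl⟩

theorem exists_true_child_mem_H (hsm : D.Smooth) (h1 : CNF.Sat a D.grpN1)
    (h2 : CNF.Sat a D.grpN2) {v : D.N} {i : Fin D.n} (hv : ∀ j s, D.label v ≠ NLabel.Leaf j s)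
    (hvi : v ∈ D.H i) (hvt : a (D.nvar v) = true) :
    ∃ c, D.edge v c ∧ c ∈ D.H i ∧ a (D.nvar c) = true := by
  rcases hlab : D.label v with _ | _ | ⟨j, s⟩
  · obtain ⟨c, hvc, hci⟩ := exists_edge_mem_H_of_not_leaf hv hvi
    exact ⟨c, hvc, hci, sat_grpN2 h2 hlab hvc hvt⟩
  · obtain ⟨c, hvc, hct⟩ := sat_grpN1 h1 hlab hvt
    exact ⟨c, hvc, hsm.mem_H_of_edge hlab hvc hvi, hct⟩
  · exact absurd hlab (hv j s)

def IsLeafPath (D : NNF) (i : Fin D.n) (v : D.N) (p : List D.N) : Prop :=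
  p.head? = some v ∧ (∀ x ∈ p, x ∈ D.H i) ∧ p.IsChain D.edge ∧
    ∃ t, p.getLast? = some t ∧ t ∈ D.Lset i

theorem IsLeafPath.cons {i : Fin D.n} {v u : D.N} {p : List D.N} (hp : D.IsLeafPath i u p)
    (hvu : D.edge v u) (hvi : v ∈ D.H i) : D.IsLeafPath i v (v :: p) := by
  obtain ⟨hhead, hpi, hchain, t, hlast, ht⟩ := hp
  obtain ⟨q, rfl⟩ := List.head?_eq_some_iff.mp hhead
  refine ⟨rfl, ?_, hchain.cons_cons hvu, t, ?_, ht⟩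
  · simpa [hvi] using hpi
  · rwa [List.getLast?_cons_cons]

theorem IsLeafPath.isRLPath {i : Fin D.n} {p : List D.N} (hp : D.IsLeafPath i D.root p) :
    D.IsRLPath i p := by
  obtain ⟨hhead, hpi, hchain, hleaf⟩ := hp
  exact ⟨by rintro rfl; simp at hhead, hpi, hchain, hhead, hleaf⟩

theorem exists_true_isLeafPath (hwf : WellFounded fun u v : D.N => D.edge v u)
    (hleaf : ∀ v i s, D.label v = NLabel.Leaf i s → ∀ u, ¬ D.edge v u) (hsm : D.Smooth)
    (h1 : CNF.Sat a D.grpN1) (h2 : CNF.Sat a D.grpN2) {i : Fin D.n} (v : D.N)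
    (hvi : v ∈ D.H i) (hvt : a (D.nvar v) = true) :
    ∃ p, D.IsLeafPath i v p ∧ ∀ x ∈ p, a (D.nvar x) = true := by
  induction v using hwf.induction with
  | _ v ih =>
  by_cases hv : ∃ j s, D.label v = NLabel.Leaf j s
  · obtain ⟨j, s, hv⟩ := hv
    refine ⟨[v], ⟨rfl, by simpa using hvi, List.isChain_singleton v, v, rfl, ?_⟩,
      by simpa using hvt⟩
    exact mem_Lset_of_mem_H hleaf hv hvi
  · push Not at hv
    obtain ⟨c, hvc, hci, hct⟩ := exists_true_child_mem_H hsm h1 h2 hv hvi hvt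
    obtain ⟨p, hp, hpt⟩ := ih c hvc hci hct
    exact ⟨v :: p, hp.cons hvc hvi, by simpa [hvt] using hpt⟩

theorem mem_of_isRLPath_of_sat_grpN5 {𝒮 : ∀ _ : Fin D.n, Set (Set D.N)} (hcov : D.CoveredBy 𝒮)
    (h5 : CNF.Sat a (D.grpN5 𝒮)) {i : Fin D.n} {p : List D.N} (hp : D.IsRLPath i p)
    (hpt : ∀ x ∈ p, a (D.nvar x) = true) {w : D.N} (hwi : w ∈ D.H i)
    (hwt : a (D.nvar w) = true) : w ∈ p := by
  by_cases hw : w = D.root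
  · exact List.mem_of_mem_head? (hw ▸ hp.2.2.2.1)
  obtain ⟨S, hS, hwS⟩ : w ∈ ⋃₀ 𝒮 i := by rw [(hcov i).2]; exact ⟨hwi, hw⟩
  obtain ⟨z, ⟨hzp, hzS⟩, -⟩ := ((hcov i).1 S hS).2 p hp
  rwa [← sat_grpN5 h5 hS hzS hwS (hpt z hzp) hwt]

end NNF

theorem stmt14_general (D : NNF) (hwf : D.WF) (hsm : D.Smooth)
    (𝒮 : ∀ _ : Fin D.n, Set (Set D.N)) (hcov : D.CoveredBy 𝒮)
    (a : D.EVar → Bool) (ha : CNF.Sat a (D.psiC 𝒮)) :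
    ∀ i, ∃! s, s ∈ D.Dom i ∧ a (Sum.inl (i, s)) = true := by
  obtain ⟨-, hwf, hdom, hleaf, -, hreach, hleafex, -⟩ := hwf
  have h1 : CNF.Sat a D.grpN1 := fun C hC => ha C (by simp [NNF.psiC, hC])
  have h2 : CNF.Sat a D.grpN2 := fun C hC => ha C (by simp [NNF.psiC, hC])
  have h4 : CNF.Sat a D.grpN4 := fun C hC => ha C (by simp [NNF.psiC, hC])
  have h5 : CNF.Sat a (D.grpN5 𝒮) := fun C hC => ha C (by simp [NNF.psiC, hC])
  intro i
  obtain ⟨p, hp, hpt⟩ := NNF.exists_true_isLeafPath hwf hleaf hsm h1 h2 D.root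
    (NNF.root_mem_H hreach i (hleafex i)) (NNF.sat_psiC_root ha)
  have hrl := hp.isRLPath
  obtain ⟨-, -, hchain, t, hlast, st, ht⟩ := hp
  have true_leaf_eq : ∀ w s, D.label w = NLabel.Leaf i s → a (Sum.inl (i, s)) = true → w = t :=
    fun w s hw hwt => List.IsChain.eq_of_mem_of_getLast?_eq (hleaf w i s hw) hchain
      (NNF.mem_of_isRLPath_of_sat_grpN5 hcov h5 hrl hpt (NNF.mem_H_of_label_eq_leaf hw)
        (by rwa [NNF.nvar_of_label_eq_leaf hw])) hlast
  refine ⟨st, ⟨hdom t i st ht, ?_⟩, ?_⟩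
  · rw [← NNF.nvar_of_label_eq_leaf ht]
    exact hpt t (List.mem_of_getLast? hlast)
  rintro s ⟨hs, hst⟩
  by_cases hex : ∃ w, D.label w = NLabel.Leaf i s
  · obtain ⟨w, hw⟩ := hex
    rw [true_leaf_eq w s hw hst, ht] at hw
    exact (NLabel.Leaf.inj hw).2.symm
  · simp [NNF.sat_grpN4 h4 hs (not_exists.mp hex)] at hst

/-- Let `D` be a smooth DNNF covered by separators.  Then
`ψ_c` implies the direct encoding constraints: every satisfying assignment of
`ψ_c` sets, for each `i`, exactly one domain variable of `⟦x_i⟧` to `1`. -/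
theorem stmt14 (D : NNF) (hwf : D.WF) (hdec : D.Decomposable) (hsm : D.Smooth)
    (𝒮 : ∀ _ : Fin D.n, Set (Set D.N)) (hcov : D.CoveredBy 𝒮)
    (a : D.EVar → Bool) (ha : CNF.Sat a (D.psiC 𝒮)) :
    ∀ i, ∃! s, s ∈ D.Dom i ∧ a (Sum.inl (i, s)) = true :=
  stmt14_general D hwf hsm 𝒮 hcov a ha
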